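/- Let m ≥ 1 and λ ∈ (0, 2). For all u, v ∈ ℝ^m with u ≥ 0 and v ≥ 0, one has g(u,v) = Σ_{i=1}^m (u_i + v_i − 1)^2 + λ·(Σ_{i=1}^m (u_i + v_i) − √(Σ_{i=1}^m (u_i^2 + v_i^2))) ≥ g*(λ), and equality holds if and only if (u_i, v_i) = (c(λ), 0) or (u_i, v_i) = (0, c(λ)) for every i ∈ [m]. In particular, the minimum of g over the nonnegative orthant is g*(λ) and its set of minimizers is Y*. -/

import Mathlib

/-! Write `t = √m`, `sᵢ = uᵢ + vᵢ`, `r = √(∑ sᵢ²)`, and note that `c = c(λ)` satisfies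
`2tc = λ + (2 - λ)t` and `g* = m - (tc)²`. Then
`g(u,v) - g* = λ (r - √(∑ uᵢ² + vᵢ²)) + (2 - λ) (t r - ∑ sᵢ) + (r - t c)²`.
The first bracket is nonnegative because `uᵢ vᵢ ≥ 0`, the second by Cauchy–Schwarz. Equality
forces every `uᵢ vᵢ = 0`, together with `∑ sᵢ = m c` and `∑ sᵢ² = m c²`, i.e. `s ≡ c`. -/

open Finset Real

section Orthant

variable {ι : Type*} [Fintype ι]

noncomputable def orthantObjective (lam : ℝ) (u v : ι → ℝ) : ℝ :=
  (∑ i, (u i + v i - 1) ^ 2) + lam * ((∑ i, (u i + v i)) - √(∑ i, (u i ^ 2 + v i ^ 2)))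

noncomputable def optCoord (lam n : ℝ) : ℝ := (lam / √n - lam + 2) / 2

noncomputable def optValue (lam n : ℝ) : ℝ :=
  lam * ((1 - lam / 4) * n + (lam / 2 - 1) * √n - lam / 4)

theorem sum_le_sqrt_card_mul_sqrt_sum_sq (s : ι → ℝ) :
    ∑ i, s i ≤ √(Fintype.card ι) * √(∑ i, s i ^ 2) := by
  rw [← sqrt_mul (Nat.cast_nonneg _)]
  exact le_sqrt_of_sq_le (by simpa using sq_sum_le_card_mul_sum_sq (s := univ) (f := s))

theorem sum_sq_add_sq_le_sum_add_sq {u v : ι → ℝ} (hu : ∀ i, 0 ≤ u i) (hv : ∀ i, 0 ≤ v i) :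
    ∑ i, (u i ^ 2 + v i ^ 2) ≤ ∑ i, (u i + v i) ^ 2 :=
  sum_le_sum fun i _ => by nlinarith [mul_nonneg (hu i) (hv i)]

theorem sum_sq_add_sq_eq_sum_add_sq_iff {u v : ι → ℝ} (hu : ∀ i, 0 ≤ u i) (hv : ∀ i, 0 ≤ v i) :
    ∑ i, (u i ^ 2 + v i ^ 2) = ∑ i, (u i + v i) ^ 2 ↔ ∀ i, u i * v i = 0 := by
  have hdiff : ∑ i, (u i + v i) ^ 2 - ∑ i, (u i ^ 2 + v i ^ 2) = ∑ i, 2 * (u i * v i) := by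
    rw [← sum_sub_distrib]; exact sum_congr rfl fun i _ => by ring
  rw [eq_comm, ← sub_eq_zero, hdiff,
    sum_eq_zero_iff_of_nonneg fun i _ => mul_nonneg zero_le_two (mul_nonneg (hu i) (hv i))]
  simp

theorem eq_of_sum_eq_of_sum_sq_eq {s : ι → ℝ} {c : ℝ} (hL : ∑ i, s i = Fintype.card ι * c)
    (hQ : ∑ i, s i ^ 2 = Fintype.card ι * c ^ 2) (i : ι) : s i = c := by
  have hvar : ∑ j, (s j - c) ^ 2 = 0 := by
    simp only [sub_sq, sum_add_distrib, sum_sub_distrib, ← sum_mul, ← mul_sum, hL, hQ,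
      sum_const, card_univ, nsmul_eq_mul]
    ring
  have := (sum_eq_zero_iff_of_nonneg fun j _ => sq_nonneg (s j - c)).mp hvar i (mem_univ i)
  exact sub_eq_zero.mp (pow_eq_zero_iff two_ne_zero |>.mp this)

theorem orthantObjective_eq {lam t c : ℝ} (hc : 2 * t * c = lam + (2 - lam) * t) (u v : ι → ℝ) :
    orthantObjective lam u v = Fintype.card ι - (t * c) ^ 2
      + lam * (√(∑ i, (u i + v i) ^ 2) - √(∑ i, (u i ^ 2 + v i ^ 2)))
      + (2 - lam) * (t * √(∑ i, (u i + v i) ^ 2) - ∑ i, (u i + v i))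
      + (√(∑ i, (u i + v i) ^ 2) - t * c) ^ 2 := by
  have hr : √(∑ i, (u i + v i) ^ 2) ^ 2 = ∑ i, (u i + v i) ^ 2 :=
    sq_sqrt (sum_nonneg fun i _ => sq_nonneg _)
  have hsum : ∑ i, (u i + v i - 1) ^ 2 =
      ∑ i, (u i + v i) ^ 2 - 2 * ∑ i, (u i + v i) + Fintype.card ι := by
    simp only [sub_sq, sum_add_distrib, sum_sub_distrib, ← mul_sum, ← sum_mul, sum_const,
      card_univ, nsmul_eq_mul]
    ring
  rw [orthantObjective, hsum]
  linear_combination -hr + √(∑ i, (u i + v i) ^ 2) * hc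

theorem sqrt_mul_sqrt_sum_sq_eq_sum_and_eq_iff {s : ι → ℝ} {c : ℝ} (hc : 0 ≤ c) :
    (√(Fintype.card ι) * √(∑ i, s i ^ 2) = ∑ i, s i ∧ √(∑ i, s i ^ 2) = √(Fintype.card ι) * c) ↔
      ∀ i, s i = c := by
  have hn : (0 : ℝ) ≤ Fintype.card ι := Nat.cast_nonneg _
  constructor
  · rintro ⟨hL, hr⟩
    refine eq_of_sum_eq_of_sum_sq_eq ?_ ?_
    · rw [← hL, hr, ← mul_assoc, mul_self_sqrt hn]
    · rw [← sq_sqrt (sum_nonneg fun i _ => sq_nonneg (s i)), hr, mul_pow, sq_sqrt hn]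
  · intro h
    simp only [h, sum_const, card_univ, nsmul_eq_mul]
    rw [sqrt_mul hn, sqrt_sq hc]
    exact ⟨by rw [← mul_assoc, mul_self_sqrt hn], rfl⟩

theorem mul_eq_zero_and_add_eq_iff {a b c : ℝ} :
    a * b = 0 ∧ a + b = c ↔ (a = c ∧ b = 0) ∨ (a = 0 ∧ b = c) := by
  constructor
  · rintro ⟨hab, rfl⟩
    rcases mul_eq_zero.1 hab with rfl | rfl <;> simp
  · rintro (⟨rfl, rfl⟩ | ⟨rfl, rfl⟩) <;> simp

theorem two_mul_sqrt_mul_optCoord (lam : ℝ) {n : ℝ} (hn : 0 < n) :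
    2 * √n * optCoord lam n = lam + (2 - lam) * √n := by
  have : √n ≠ 0 := (sqrt_pos.2 hn).ne'
  rw [optCoord]; field_simp; ring

theorem optCoord_nonneg {lam n : ℝ} (hn : 0 < n) (h0 : 0 ≤ lam) (h2 : lam ≤ 2) :
    0 ≤ optCoord lam n := by
  have h := two_mul_sqrt_mul_optCoord lam hn
  have ht := sqrt_pos.2 hn
  nlinarith [mul_nonneg (sub_nonneg.2 h2) ht.le]

theorem optValue_eq (lam : ℝ) {n : ℝ} (hn : 0 < n) :
    optValue lam n = n - (√n * optCoord lam n) ^ 2 := by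
  have h := two_mul_sqrt_mul_optCoord lam hn
  have ht := sq_sqrt hn.le
  rw [optValue]
  linear_combination ((2 * √n * optCoord lam n + lam + (2 - lam) * √n) / 4) * h
    + ((2 - lam) ^ 2 / 4) * ht

theorem optValue_le_orthantObjective_and_eq_iff [Nonempty ι] {lam : ℝ} (h0 : 0 < lam)
    (h2 : lam < 2) {u v : ι → ℝ} (hu : ∀ i, 0 ≤ u i) (hv : ∀ i, 0 ≤ v i) :
    optValue lam (Fintype.card ι) ≤ orthantObjective lam u v ∧
      (orthantObjective lam u v = optValue lam (Fintype.card ι) ↔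
        ∀ i, (u i = optCoord lam (Fintype.card ι) ∧ v i = 0) ∨
          (u i = 0 ∧ v i = optCoord lam (Fintype.card ι))) := by
  have hn : (0 : ℝ) < Fintype.card ι := by exact_mod_cast Fintype.card_pos
  set c := optCoord lam (Fintype.card ι)
  set t := √(Fintype.card ι : ℝ)
  set r := √(∑ i, (u i + v i) ^ 2)
  set w := √(∑ i, (u i ^ 2 + v i ^ 2))
  have hA : 0 ≤ r - w := sub_nonneg.2 (sqrt_le_sqrt (sum_sq_add_sq_le_sum_add_sq hu hv))
  have hB : 0 ≤ t * r - ∑ i, (u i + v i) :=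
    sub_nonneg.2 (sum_le_sqrt_card_mul_sqrt_sum_sq fun i => u i + v i)
  have hgap : orthantObjective lam u v - optValue lam (Fintype.card ι) =
      lam * (r - w) + (2 - lam) * (t * r - ∑ i, (u i + v i)) + (r - t * c) ^ 2 := by
    rw [orthantObjective_eq (two_mul_sqrt_mul_optCoord lam hn), optValue_eq lam hn]
    ring
  have hA' := mul_nonneg h0.le hA
  have hB' := mul_nonneg (sub_nonneg.2 h2.le) hB
  have hgap_nonneg := add_nonneg (add_nonneg hA' hB') (sq_nonneg (r - t * c))
  refine ⟨sub_nonneg.1 (hgap ▸ hgap_nonneg), ?_⟩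
  rw [← sub_eq_zero, hgap, add_eq_zero_iff_of_nonneg (add_nonneg hA' hB') (sq_nonneg _),
    add_eq_zero_iff_of_nonneg hA' hB']
  simp only [mul_eq_zero, h0.ne', (sub_pos.2 h2).ne', false_or, pow_eq_zero_iff two_ne_zero,
    sub_eq_zero]
  have hw : r = w ↔ ∀ i, u i * v i = 0 := by
    rw [eq_comm, sqrt_inj (sum_nonneg fun i _ => by positivity)
      (sum_nonneg fun i _ => by positivity), sum_sq_add_sq_eq_sum_add_sq_iff hu hv]
  rw [and_assoc, hw, sqrt_mul_sqrt_sum_sq_eq_sum_and_eq_iff (s := fun i => u i + v i)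
    (optCoord_nonneg hn h0.le h2.le), ← forall_and]
  exact forall_congr' fun i => mul_eq_zero_and_add_eq_iff

end Orthant

/-- For `λ ∈ (0,2)` and `u, v ≥ 0`,
`g(u,v) = ∑(uᵢ+vᵢ−1)² + λ(∑(uᵢ+vᵢ) − √(∑(uᵢ²+vᵢ²))) ≥ g*(λ)`, with equality iff
`(uᵢ, vᵢ) = (c(λ), 0)` or `(0, c(λ))` for every `i` (so the minimizer set is `Y*`). -/
theorem g_min_over_orthant (m : ℕ) (hm : 1 ≤ m) (lam : ℝ)
    (hlam0 : 0 < lam) (hlam2 : lam < 2)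
    (c gstar : ℝ)
    (hc : c = (lam / Real.sqrt m - lam + 2) / 2)
    (hgstar : gstar = lam * ((1 - lam / 4) * m + (lam / 2 - 1) * Real.sqrt m - lam / 4))
    (g : (Fin m → ℝ) → (Fin m → ℝ) → ℝ)
    (hg : ∀ u v, g u v = (∑ i, (u i + v i - 1) ^ 2)
      + lam * ((∑ i, (u i + v i)) - Real.sqrt (∑ i, (u i ^ 2 + v i ^ 2)))) :
    ∀ u v : Fin m → ℝ, (∀ i, 0 ≤ u i) → (∀ i, 0 ≤ v i) →
      gstar ≤ g u v ∧
      (g u v = gstar ↔ ∀ i, (u i = c ∧ v i = 0) ∨ (u i = 0 ∧ v i = c)) := by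
  intro u v hu hv
  have : Nonempty (Fin m) := ⟨⟨0, hm⟩⟩
  have hmin := optValue_le_orthantObjective_and_eq_iff hlam0 hlam2 hu hv
  rw [Fintype.card_fin] at hmin
  rw [hg, hc, hgstar]
  exact hmin
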